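/- arXiv:2112.10918 — 3 statements merged into one kernel-verified Lean document; each statement's English description precedes it below -/
import Mathlib

section
/- Comparison bound for the hodograph gradient: let H : [0,ε] × [0,T] → ℝ be continuous, smooth in the interior, and satisfy H_t = -(H^{-1})_{zz} + c(z,t) H in (0,ε)×(0,T] with |c| ≤ k pointwise for a constant k ≥ 0, together with m ≤ H(z,0) ≤ M on [0,ε], m ≤ H(0,t) ≤ M and m ≤ H(ε,t) ≤ M on (0,T], where 0 < m ≤ M. If H > 0 everywhere, then m e^{-kt} ≤ H(z,t) ≤ M e^{kt} for all (z,t) ∈ [0,ε]×[0,T]. -/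
open Set Filter Real Topology

/-- If `g` attains a minimum over `[a,b]` at the right endpoint `b` and is
differentiable at `b`, then `deriv g b ≤ 0`. -/
lemma deriv_nonpos_of_isMinOn_right (g : ℝ → ℝ) (a b : ℝ) (hab : a < b)
    (hd : DifferentiableAt ℝ g b) (hmin : ∀ τ ∈ Set.Icc a b, g b ≤ g τ) :
    deriv g b ≤ 0 := by
  have hderiv : HasDerivWithinAt g (deriv g b) (Iio b) b :=
    hd.hasDerivAt.hasDerivWithinAt
  have htend := hasDerivWithinAt_iff_tendsto_slope.1 hderiv
  have hset : Iio b \ {b} = Iio b := Set.diff_singleton_eq_self (by simp)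
  rw [hset] at htend
  refine le_of_tendsto htend ?_
  filter_upwards [Ioo_mem_nhdsLT_of_mem (show b ∈ Set.Ioc a b from ⟨hab, le_rfl⟩)] with x hx
  rw [slope_def_field]
  exact div_nonpos_iff.2 (Or.inl ⟨sub_nonneg.2 (hmin x ⟨hx.1.le, hx.2.le⟩),
    (sub_neg.2 hx.2).le⟩)

/-- If `g` attains a maximum over `[a,b]` at the right endpoint `b` and is
differentiable at `b`, then `0 ≤ deriv g b`. -/
lemma deriv_nonneg_of_isMaxOn_right (g : ℝ → ℝ) (a b : ℝ) (hab : a < b)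
    (hd : DifferentiableAt ℝ g b) (hmax : ∀ τ ∈ Set.Icc a b, g τ ≤ g b) :
    0 ≤ deriv g b := by
  have h := deriv_nonpos_of_isMinOn_right (fun x => -g x) a b hab hd.neg
    (fun τ hτ => neg_le_neg (hmax τ hτ))
  rw [deriv.fun_neg] at h
  linarith

/-- Second derivative test: at a local max of a `C²` function, `f'' ≤ 0`. -/
lemma secondDeriv_nonpos_of_isLocalMax (f : ℝ → ℝ) (a : ℝ)
    (hf : ContDiffAt ℝ 2 f a) (h : IsLocalMax f a) : deriv (deriv f) a ≤ 0 := by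
  by_contra hlt
  push_neg at hlt
  obtain ⟨u, hu, hfu⟩ := hf.contDiffOn le_rfl (by simp)
  have hv : IsOpen (interior u) := isOpen_interior
  have hav : a ∈ interior u := mem_interior_iff_mem_nhds.2 hu
  have hfv : ContDiffOn ℝ 2 f (interior u) := hfu.mono interior_subset
  have hdv : ContDiffOn ℝ 1 (deriv f) (interior u) := hfv.deriv_of_isOpen hv (by norm_num)
  have hdiffv : DifferentiableOn ℝ f (interior u) := hfv.differentiableOn (by norm_num)
  have hd2 : HasDerivAt (deriv f) (deriv (deriv f) a) a :=
    ((hdv.differentiableOn one_ne_zero).differentiableAt (hv.mem_nhds hav)).hasDerivAt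
  have hd0 : deriv f a = 0 := h.deriv_eq_zero
  have hslope := hasDerivAt_iff_tendsto_slope.1 hd2
  have hev : ∀ᶠ x in 𝓝[>] a, 0 < slope (deriv f) a x :=
    (hslope.mono_left (nhdsWithin_mono a fun x hx => ne_of_gt hx)).eventually
      (eventually_gt_nhds hlt)
  have hev2 : ∀ᶠ x in 𝓝[>] a, (0 < deriv f x ∧ x ∈ interior u) ∧ f x ≤ f a := by
    have h1 : ∀ᶠ x in 𝓝[>] a, 0 < deriv f x := by
      filter_upwards [hev, self_mem_nhdsWithin] with x hx hx'
      rw [slope_def_field, hd0, sub_zero] at hx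
      rcases div_pos_iff.1 hx with ⟨h1, _⟩ | ⟨_, h2⟩
      · exact h1
      · linarith [sub_pos.2 (show a < x from hx')]
    have h2 : ∀ᶠ x in 𝓝[>] a, x ∈ interior u :=
      (hv.eventually_mem hav).filter_mono nhdsWithin_le_nhds
    have h3 : ∀ᶠ x in 𝓝[>] a, f x ≤ f a := h.filter_mono nhdsWithin_le_nhds
    exact (h1.and h2).and h3
  obtain ⟨b, hb, hIoo⟩ := mem_nhdsGT_iff_exists_Ioo_subset.1 hev2
  set x := (a + b) / 2 with hx_def
  have hax : a < x := by
    simp only [hx_def]; linarith [mem_Ioi.1 hb]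
  have hxb : x < b := by
    simp only [hx_def]; linarith [mem_Ioi.1 hb]
  have hxI : x ∈ Ioo a b := ⟨hax, hxb⟩
  have hIccv : Icc a x ⊆ interior u := by
    intro y hy
    rcases eq_or_lt_of_le hy.1 with rfl | hy1
    · exact hav
    · exact (hIoo ⟨hy1, lt_of_le_of_lt hy.2 hxb⟩).1.2
  have hcont : ContinuousOn f (Icc a x) := (hfv.continuousOn).mono hIccv
  have hder : ∀ y ∈ Ioo a x, HasDerivAt f (deriv f y) y := fun y hy =>
    (hdiffv.differentiableAt (hv.mem_nhds (hIoo ⟨hy.1, lt_trans hy.2 hxb⟩).1.2)).hasDerivAt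
  obtain ⟨ξ, hξ, hξeq⟩ := exists_hasDerivAt_eq_slope f (deriv f) hax hcont hder
  have hpos : 0 < deriv f ξ := (hIoo ⟨hξ.1, lt_trans hξ.2 hxb⟩).1.1
  have hle : f x ≤ f a := (hIoo hxI).2
  rw [hξeq] at hpos
  have hnp : (f x - f a) / (x - a) ≤ 0 :=
    div_nonpos_iff.2 (Or.inr ⟨by linarith, by linarith⟩)
  linarith

/-- Second derivative test: at a local min of a `C²` function, `0 ≤ f''`. -/
lemma secondDeriv_nonneg_of_isLocalMin (f : ℝ → ℝ) (a : ℝ)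
    (hf : ContDiffAt ℝ 2 f a) (h : IsLocalMin f a) : 0 ≤ deriv (deriv f) a := by
  have := secondDeriv_nonpos_of_isLocalMax (fun x => -f x) a hf.neg h.neg
  have e1 : deriv (fun x => -f x) = fun x => -deriv f x := funext fun x => deriv.neg
  rw [e1] at this
  have e2 : deriv (fun x => -deriv f x) a = -deriv (deriv f) a := deriv.neg
  rw [e2] at this
  linarith

theorem stmt6 (ε T k m M : ℝ) (hε : 0 < ε) (hT : 0 < T) (hk : 0 ≤ k)
    (hm : 0 < m) (hmM : m ≤ M)
    (H c : ℝ → ℝ → ℝ)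
    (hcont : ContinuousOn (fun q : ℝ × ℝ => H q.1 q.2) (Set.Icc 0 ε ×ˢ Set.Icc 0 T))
    (hsmooth : ∀ t ∈ Set.Ioc (0 : ℝ) T, ContDiffOn ℝ (⊤ : ℕ∞) (fun y => H y t) (Set.Ioo 0 ε))
    (hdt : ∀ z ∈ Set.Ioo (0 : ℝ) ε, ∀ t ∈ Set.Ioc (0 : ℝ) T,
      DifferentiableAt ℝ (fun τ => H z τ) t)
    (hpos : ∀ z ∈ Set.Icc (0 : ℝ) ε, ∀ t ∈ Set.Icc (0 : ℝ) T, 0 < H z t)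
    (hc : ∀ z t, |c z t| ≤ k)
    (heq : ∀ z ∈ Set.Ioo (0 : ℝ) ε, ∀ t ∈ Set.Ioc (0 : ℝ) T,
      deriv (fun τ => H z τ) t
        = -(deriv (deriv (fun y => (H y t)⁻¹)) z) + c z t * H z t)
    (hinit : ∀ z ∈ Set.Icc (0 : ℝ) ε, m ≤ H z 0 ∧ H z 0 ≤ M)
    (hbc : ∀ t ∈ Set.Ioc (0 : ℝ) T,
      (m ≤ H 0 t ∧ H 0 t ≤ M) ∧ (m ≤ H ε t ∧ H ε t ≤ M)) :
    ∀ z ∈ Set.Icc (0 : ℝ) ε, ∀ t ∈ Set.Icc (0 : ℝ) T,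
      m * Real.exp (-k * t) ≤ H z t ∧ H z t ≤ M * Real.exp (k * t) := by
  have hQc : IsCompact (Set.Icc (0:ℝ) ε ×ˢ Set.Icc (0:ℝ) T) := isCompact_Icc.prod isCompact_Icc
  have hQne : (Set.Icc (0:ℝ) ε ×ˢ Set.Icc (0:ℝ) T).Nonempty :=
    ⟨(0,0), Set.mem_prod.2 ⟨⟨le_rfl, hε.le⟩, le_rfl, hT.le⟩⟩
  -- boundary dichotomy
  have hbd : ∀ z ∈ Set.Icc (0:ℝ) ε, ∀ t ∈ Set.Icc (0:ℝ) T,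
      (z ∈ Set.Ioo (0:ℝ) ε ∧ t ∈ Set.Ioc (0:ℝ) T) ∨ (m ≤ H z t ∧ H z t ≤ M) := by
    intro z hz t ht
    by_cases ht0 : t = 0
    · exact Or.inr (by rw [ht0]; exact hinit z hz)
    · have htI : t ∈ Set.Ioc (0:ℝ) T := ⟨lt_of_le_of_ne ht.1 (Ne.symm ht0), ht.2⟩
      rcases eq_or_lt_of_le hz.1 with hz0 | hz0
      · exact Or.inr (by rw [← hz0]; exact (hbc t htI).1)
      rcases eq_or_lt_of_le hz.2 with hzε | hzε
      · exact Or.inr (by rw [hzε]; exact (hbc t htI).2)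
      · exact Or.inl ⟨⟨hz0, hzε⟩, htI⟩
  -- LOWER BOUND
  have keyL : ∀ z ∈ Set.Icc (0:ℝ) ε, ∀ t ∈ Set.Icc (0:ℝ) T,
      m ≤ H z t * Real.exp (k * t) := by
    intro z hz t ht
    refine le_of_forall_sub_le ?_
    intro δ hδ
    set δ' := δ / (T + 1) with hδ'def
    have hδ' : 0 < δ' := div_pos hδ (by linarith)
    set F : ℝ × ℝ → ℝ := fun q => H q.1 q.2 * Real.exp (k * q.2) + δ' * q.2 with hF
    have hFc : ContinuousOn F (Set.Icc (0:ℝ) ε ×ˢ Set.Icc (0:ℝ) T) := by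
      apply ContinuousOn.add
      · exact hcont.mul
          ((Real.continuous_exp.comp (continuous_const.mul continuous_snd)).continuousOn)
      · exact (continuous_const.mul continuous_snd).continuousOn
    obtain ⟨q₀, hq₀, hminF⟩ := hQc.exists_isMinOn hQne hFc
    have hmin' : ∀ q ∈ Set.Icc (0:ℝ) ε ×ˢ Set.Icc (0:ℝ) T, F q₀ ≤ F q :=
      fun q hq => hminF hq
    have hz₀ : q₀.1 ∈ Set.Icc (0:ℝ) ε := hq₀.1
    have ht₀ : q₀.2 ∈ Set.Icc (0:ℝ) T := hq₀.2
    have hMain : m ≤ F q₀ := by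
      rcases hbd q₀.1 hz₀ q₀.2 ht₀ with ⟨hzI, htI⟩ | ⟨hmH, _⟩
      · exfalso
        have hEpos : (0:ℝ) < Real.exp (k * q₀.2) := Real.exp_pos _
        have hHpos : ∀ y ∈ Set.Icc (0:ℝ) ε, 0 < H y q₀.2 := fun y hy => hpos y hy q₀.2 ht₀
        have hH0 : 0 < H q₀.1 q₀.2 := hHpos q₀.1 hz₀
        have hspace : ∀ y ∈ Set.Icc (0:ℝ) ε, H q₀.1 q₀.2 ≤ H y q₀.2 := by
          intro y hy
          have h1 := hmin' (y, q₀.2) (Set.mem_prod.2 ⟨hy, ht₀⟩)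
          simp only [hF] at h1
          have h2 : H q₀.1 q₀.2 * Real.exp (k * q₀.2) ≤ H y q₀.2 * Real.exp (k * q₀.2) := by
            linarith
          exact le_of_mul_le_mul_right h2 hEpos
        have hlocmax : IsLocalMax (fun y => (H y q₀.2)⁻¹) q₀.1 := by
          filter_upwards [Icc_mem_nhds hzI.1 hzI.2] with y hy
          exact inv_anti₀ hH0 (hspace y hy)
        have hφsmooth : ContDiffAt ℝ 2 (fun y => (H y q₀.2)⁻¹) q₀.1 := by
          have h1 : ContDiffAt ℝ 2 (fun y => H y q₀.2) q₀.1 :=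
            ((hsmooth q₀.2 htI).contDiffAt (isOpen_Ioo.mem_nhds hzI)).of_le (WithTop.coe_le_coe.2 le_top)
          exact h1.inv (ne_of_gt hH0)
        have hφ'' : deriv (deriv (fun y => (H y q₀.2)⁻¹)) q₀.1 ≤ 0 :=
          secondDeriv_nonpos_of_isLocalMax _ _ hφsmooth hlocmax
        have hHt := heq q₀.1 hzI q₀.2 htI
        have hck : -k ≤ c q₀.1 q₀.2 := (abs_le.1 (hc q₀.1 q₀.2)).1
        have hHtge : -(k * H q₀.1 q₀.2) ≤ deriv (fun τ => H q₀.1 τ) q₀.2 := by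
          rw [hHt]
          nlinarith [mul_le_mul_of_nonneg_right hck hH0.le]
        have hgdiff : HasDerivAt (fun τ => H q₀.1 τ)
            (deriv (fun τ => H q₀.1 τ) q₀.2) q₀.2 := (hdt q₀.1 hzI q₀.2 htI).hasDerivAt
        have hlin : HasDerivAt (fun τ => k * τ) k q₀.2 := by
          simpa using (hasDerivAt_id q₀.2).const_mul k
        have hExp : HasDerivAt (fun τ => Real.exp (k * τ))
            (Real.exp (k * q₀.2) * k) q₀.2 := hlin.exp
        have hδlin : HasDerivAt (fun τ => δ' * τ) δ' q₀.2 := by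
          simpa using (hasDerivAt_id q₀.2).const_mul δ'
        have hg : HasDerivAt (fun τ => H q₀.1 τ * Real.exp (k * τ) + δ' * τ)
            (deriv (fun τ => H q₀.1 τ) q₀.2 * Real.exp (k * q₀.2)
              + H q₀.1 q₀.2 * (Real.exp (k * q₀.2) * k) + δ') q₀.2 :=
          (hgdiff.mul hExp).add hδlin
        have htime : ∀ τ ∈ Set.Icc (0:ℝ) q₀.2,
            (fun τ => H q₀.1 τ * Real.exp (k * τ) + δ' * τ) q₀.2
              ≤ (fun τ => H q₀.1 τ * Real.exp (k * τ) + δ' * τ) τ := by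
          intro τ hτ
          have hτT : τ ∈ Set.Icc (0:ℝ) T := ⟨hτ.1, le_trans hτ.2 ht₀.2⟩
          have h1 := hmin' (q₀.1, τ) (Set.mem_prod.2 ⟨hz₀, hτT⟩)
          simpa [hF] using h1
        have hd0 := deriv_nonpos_of_isMinOn_right _ 0 q₀.2 htI.1 hg.differentiableAt htime
        rw [hg.deriv] at hd0
        nlinarith [mul_le_mul_of_nonneg_right hHtge hEpos.le]
      · have hE1 : (1:ℝ) ≤ Real.exp (k * q₀.2) := Real.one_le_exp (mul_nonneg hk ht₀.1)
        have hδt : 0 ≤ δ' * q₀.2 := mul_nonneg hδ'.le ht₀.1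
        simp only [hF]
        nlinarith
    have h1 := hmin' (z, t) (Set.mem_prod.2 ⟨hz, ht⟩)
    simp only [hF] at h1
    have h2 : m ≤ H z t * Real.exp (k * t) + δ' * t := le_trans hMain h1
    have h3 : δ' * t ≤ δ := by
      have ht1 : t ≤ T + 1 := by linarith [ht.2]
      have := mul_le_mul_of_nonneg_left ht1 hδ'.le
      calc δ' * t ≤ δ' * (T + 1) := this
        _ = δ := by rw [hδ'def]; field_simp
    linarith
  -- UPPER BOUND
  have keyU : ∀ z ∈ Set.Icc (0:ℝ) ε, ∀ t ∈ Set.Icc (0:ℝ) T,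
      H z t * Real.exp (-(k * t)) ≤ M := by
    intro z hz t ht
    refine le_of_forall_sub_le ?_
    intro δ hδ
    set δ' := δ / (T + 1) with hδ'def
    have hδ' : 0 < δ' := div_pos hδ (by linarith)
    set F : ℝ × ℝ → ℝ := fun q => H q.1 q.2 * Real.exp (-(k * q.2)) - δ' * q.2 with hF
    have hFc : ContinuousOn F (Set.Icc (0:ℝ) ε ×ˢ Set.Icc (0:ℝ) T) := by
      apply ContinuousOn.sub
      · exact hcont.mul
          ((Real.continuous_exp.comp (continuous_const.mul continuous_snd).neg).continuousOn)
      · exact (continuous_const.mul continuous_snd).continuousOn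
    obtain ⟨q₀, hq₀, hmaxF⟩ := hQc.exists_isMaxOn hQne hFc
    have hmax' : ∀ q ∈ Set.Icc (0:ℝ) ε ×ˢ Set.Icc (0:ℝ) T, F q ≤ F q₀ :=
      fun q hq => hmaxF hq
    have hz₀ : q₀.1 ∈ Set.Icc (0:ℝ) ε := hq₀.1
    have ht₀ : q₀.2 ∈ Set.Icc (0:ℝ) T := hq₀.2
    have hMain : F q₀ ≤ M := by
      rcases hbd q₀.1 hz₀ q₀.2 ht₀ with ⟨hzI, htI⟩ | ⟨_, hM⟩
      · exfalso
        have hEpos : (0:ℝ) < Real.exp (-(k * q₀.2)) := Real.exp_pos _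
        have hHpos : ∀ y ∈ Set.Icc (0:ℝ) ε, 0 < H y q₀.2 := fun y hy => hpos y hy q₀.2 ht₀
        have hH0 : 0 < H q₀.1 q₀.2 := hHpos q₀.1 hz₀
        have hspace : ∀ y ∈ Set.Icc (0:ℝ) ε, H y q₀.2 ≤ H q₀.1 q₀.2 := by
          intro y hy
          have h1 := hmax' (y, q₀.2) (Set.mem_prod.2 ⟨hy, ht₀⟩)
          simp only [hF] at h1
          have h2 : H y q₀.2 * Real.exp (-(k * q₀.2))
              ≤ H q₀.1 q₀.2 * Real.exp (-(k * q₀.2)) := by linarith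
          exact le_of_mul_le_mul_right h2 hEpos
        have hlocmin : IsLocalMin (fun y => (H y q₀.2)⁻¹) q₀.1 := by
          filter_upwards [Icc_mem_nhds hzI.1 hzI.2] with y hy
          exact inv_anti₀ (hHpos y hy) (hspace y hy)
        have hφsmooth : ContDiffAt ℝ 2 (fun y => (H y q₀.2)⁻¹) q₀.1 := by
          have h1 : ContDiffAt ℝ 2 (fun y => H y q₀.2) q₀.1 :=
            ((hsmooth q₀.2 htI).contDiffAt (isOpen_Ioo.mem_nhds hzI)).of_le (WithTop.coe_le_coe.2 le_top)
          exact h1.inv (ne_of_gt hH0)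
        have hφ'' : 0 ≤ deriv (deriv (fun y => (H y q₀.2)⁻¹)) q₀.1 :=
          secondDeriv_nonneg_of_isLocalMin _ _ hφsmooth hlocmin
        have hHt := heq q₀.1 hzI q₀.2 htI
        have hck : c q₀.1 q₀.2 ≤ k := (abs_le.1 (hc q₀.1 q₀.2)).2
        have hHtle : deriv (fun τ => H q₀.1 τ) q₀.2 ≤ k * H q₀.1 q₀.2 := by
          rw [hHt]
          nlinarith [mul_le_mul_of_nonneg_right hck hH0.le]
        have hgdiff : HasDerivAt (fun τ => H q₀.1 τ)
            (deriv (fun τ => H q₀.1 τ) q₀.2) q₀.2 := (hdt q₀.1 hzI q₀.2 htI).hasDerivAt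
        have hlin : HasDerivAt (fun τ => -(k * τ)) (-k) q₀.2 := by
          simpa using ((hasDerivAt_id q₀.2).const_mul k).fun_neg
        have hExp : HasDerivAt (fun τ => Real.exp (-(k * τ)))
            (Real.exp (-(k * q₀.2)) * (-k)) q₀.2 := hlin.exp
        have hδlin : HasDerivAt (fun τ => δ' * τ) δ' q₀.2 := by
          simpa using (hasDerivAt_id q₀.2).const_mul δ'
        have hg : HasDerivAt (fun τ => H q₀.1 τ * Real.exp (-(k * τ)) - δ' * τ)
            (deriv (fun τ => H q₀.1 τ) q₀.2 * Real.exp (-(k * q₀.2))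
              + H q₀.1 q₀.2 * (Real.exp (-(k * q₀.2)) * (-k)) - δ') q₀.2 :=
          (hgdiff.mul hExp).sub hδlin
        have htime : ∀ τ ∈ Set.Icc (0:ℝ) q₀.2,
            (fun τ => H q₀.1 τ * Real.exp (-(k * τ)) - δ' * τ) τ
              ≤ (fun τ => H q₀.1 τ * Real.exp (-(k * τ)) - δ' * τ) q₀.2 := by
          intro τ hτ
          have hτT : τ ∈ Set.Icc (0:ℝ) T := ⟨hτ.1, le_trans hτ.2 ht₀.2⟩
          have h1 := hmax' (q₀.1, τ) (Set.mem_prod.2 ⟨hz₀, hτT⟩)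
          simpa [hF] using h1
        have hd0 := deriv_nonneg_of_isMaxOn_right _ 0 q₀.2 htI.1 hg.differentiableAt htime
        rw [hg.deriv] at hd0
        nlinarith [mul_le_mul_of_nonneg_right hHtle hEpos.le]
      · have hE1 : Real.exp (-(k * q₀.2)) ≤ 1 :=
          Real.exp_le_one_iff.2 (by nlinarith [mul_nonneg hk ht₀.1])
        have hδt : 0 ≤ δ' * q₀.2 := mul_nonneg hδ'.le ht₀.1
        have hpos0 : 0 < H q₀.1 q₀.2 := hpos _ hz₀ _ ht₀
        simp only [hF]
        nlinarith
    have h1 := hmax' (z, t) (Set.mem_prod.2 ⟨hz, ht⟩)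
    simp only [hF] at h1
    have h2 : H z t * Real.exp (-(k * t)) - δ' * t ≤ M := le_trans h1 hMain
    have h3 : δ' * t ≤ δ := by
      have ht1 : t ≤ T + 1 := by linarith [ht.2]
      have := mul_le_mul_of_nonneg_left ht1 hδ'.le
      calc δ' * t ≤ δ' * (T + 1) := this
        _ = δ := by rw [hδ'def]; field_simp
    linarith
  -- conclude
  intro z hz t ht
  constructor
  · have h1 := keyL z hz t ht
    have h2 := mul_le_mul_of_nonneg_right h1 (Real.exp_pos (-(k * t))).le
    have h3 : H z t * Real.exp (k * t) * Real.exp (-(k * t)) = H z t := by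
      rw [mul_assoc, ← Real.exp_add]
      simp
    rw [h3] at h2
    calc m * Real.exp (-k * t) = m * Real.exp (-(k * t)) := by rw [neg_mul]
      _ ≤ H z t := h2
  · have h1 := keyU z hz t ht
    have h2 := mul_le_mul_of_nonneg_right h1 (Real.exp_pos (k * t)).le
    have h3 : H z t * Real.exp (-(k * t)) * Real.exp (k * t) = H z t := by
      rw [mul_assoc, ← Real.exp_add]
      simp
    rw [h3] at h2
    exact h2
end

section
/- Barrier subsolution for the generalized Hopf lemma: let L = ∂_t - a ∂_{xx} + c ∂_x + d with bounded coefficients and inf a > 0, and let l, r be smooth functions on [0,T] with l < r. Define ψ(x,t) = η̂ e^{-Mt - L₀(x - (r(t)+l(t))/2)²/2} sin(π(x-l(t))/(r(t)-l(t))). Then for L₀ = 2 max_{[0,T]}[(|r'| + |l'| + ‖c‖_∞)/(r-l)]/inf a and all M sufficiently large, Lψ ≤ 0 on {(x,t) : 0 < t ≤ T, l(t) < x < r(t)}. -/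
open Real


lemma jordanAux (s : ℝ) (hs : |s| ≤ π/2) : |Real.sin s| * (π - 2* |s|) ≤ π * Real.cos s := by
  have habs : (0:ℝ) ≤ |s| := abs_nonneg s
  have h1 : Real.cos s = Real.sin (π/2 - |s|) := by
    rw [Real.sin_pi_div_two_sub, Real.cos_abs]
  have hj : 2/π * (π/2 - |s|) ≤ Real.sin (π/2 - |s|) :=
    Real.mul_le_sin (by linarith) (by linarith)
  have hπ : (0:ℝ) < π := Real.pi_pos
  have h2 : |Real.sin s| ≤ 1 := abs_sin_le_one s
  have h3 : (0:ℝ) ≤ π - 2* |s| := by linarith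
  calc |Real.sin s| * (π - 2* |s|) ≤ 1 * (π - 2* |s|) := by
        exact mul_le_mul_of_nonneg_right h2 h3
    _ = 2*(π/2 - |s|) := by ring
    _ ≤ π * Real.sin (π/2 - |s|) := by
        have := mul_le_mul_of_nonneg_left hj (le_of_lt hπ)
        calc 2*(π/2 - |s|) = π * (2/π * (π/2 - |s|)) := by field_simp
          _ ≤ π * Real.sin (π/2 - |s|) := this
    _ = π * Real.cos s := by rw [h1]

set_option maxHeartbeats 1000000 in
lemma keyIneq (η E ia Ma Mc Md L0 M aa cc dd w xl r' l' Dm Dc Pw : ℝ)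
    (hη : 0 ≤ η) (hE : 0 ≤ E) (hw0 : 0 < w) (hxl0 : 0 < xl) (hxlw : xl < w)
    (hia : 0 < ia) (haL : ia ≤ aa) (haU : aa ≤ Ma) (hccb : |cc| ≤ Mc) (hddb : dd ≤ Md)
    (hL0 : 0 ≤ L0)
    (hKeyB : |l'| + |r' - l'| + Mc ≤ ia * L0 * w)
    (hDm : L0 * |xl - w/2| * |(r' + l')/2| ≤ Dm)
    (hDc : Mc * (L0 * |xl - w/2|) ≤ Dc)
    (hPw : aa * (π/w)^2 ≤ Pw)
    (hM : π*ia*L0 + Dm + Ma*L0 + Pw + Dc + Md ≤ M) :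
    η * E * ((-M + L0*(xl - w/2)*((r'+l')/2) - aa*(L0^2*(xl - w/2)^2) + aa*L0
        + aa*(π/w)^2 - cc*(L0*(xl - w/2)) + dd) * Real.sin (π*xl/w)
      + (π/w)*((-l' - xl*(r'-l')/w + cc) + 2*aa*L0*(xl - w/2)) * Real.cos (π*xl/w)) ≤ 0 := by
  have hπ : (0:ℝ) < π := Real.pi_pos
  have hwne : w ≠ 0 := ne_of_gt hw0
  obtain ⟨θ, hθdef⟩ : ∃ θ', θ' = π*xl/w := ⟨_, rfl⟩
  rw [← hθdef]
  obtain ⟨s, hsdef⟩ : ∃ s', s' = θ - π/2 := ⟨_, rfl⟩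
  have hθ0 : 0 < θ := by rw [hθdef]; exact div_pos (mul_pos hπ hxl0) hw0
  have hθπ : θ < π := by
    rw [hθdef, div_lt_iff₀ hw0]; nlinarith
  have hs : |s| ≤ π/2 := abs_le.2 ⟨by rw [hsdef]; linarith, by rw [hsdef]; linarith⟩
  have hsb := abs_le.1 hs
  have hX : xl - w/2 = w*s/π := by
    rw [hsdef, hθdef]; field_simp
  have hsinθ : Real.sin θ = Real.cos s := by
    rw [hsdef, Real.cos_sub_pi_div_two]
  have hcosθ : Real.cos θ = -Real.sin s := by
    have := Real.sin_sub_pi_div_two θ; rw [← hsdef] at this; linarith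
  have hSnn : 0 ≤ Real.sin θ := Real.sin_nonneg_of_nonneg_of_le_pi hθ0.le hθπ.le
  have hssin : 0 ≤ s * Real.sin s := by
    rcases le_or_gt 0 s with h | h
    · exact mul_nonneg h (Real.sin_nonneg_of_nonneg_of_le_pi h (by linarith [hsb.2]))
    · have hss : Real.sin s ≤ 0 :=
        Real.sin_nonpos_of_nonpos_of_neg_pi_le h.le (by linarith [hsb.1])
      nlinarith
  have hsseq : s * Real.sin s = |s| * |Real.sin s| := by
    rw [← abs_mul, abs_of_nonneg hssin]
  have jord := jordanAux s hs
  have hiaL0 : 0 ≤ ia * L0 := mul_nonneg hia.le hL0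
  -- B part
  obtain ⟨β, hβdef⟩ : ∃ β', β' = -l' - xl*(r'-l')/w + cc := ⟨_, rfl⟩
  rw [show (-l' - xl*(r'-l')/w + cc) = β from hβdef.symm]
  have hβ : |β| ≤ ia * L0 * w := by
    have h1 : |β| ≤ |(-l' - xl*(r'-l')/w)| + |cc| := by rw [hβdef]; exact abs_add_le _ _
    have h2 : |(-l' - xl*(r'-l')/w)| ≤ |l'| + |xl*(r'-l')/w| := by
      have := abs_add_le (-l') (-(xl*(r'-l')/w))
      simpa [sub_eq_add_neg, abs_neg] using this
    have h3 : |xl*(r'-l')/w| ≤ |r' - l'| := by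
      rw [abs_div, abs_mul, abs_of_pos hxl0, abs_of_pos hw0, div_le_iff₀ hw0]
      nlinarith [abs_nonneg (r' - l')]
    linarith
  have hBle : (π/w)*(β + 2*aa*L0*(xl - w/2)) * Real.cos θ ≤ π*ia*L0*Real.sin θ := by
    rw [hX, hcosθ]
    have heq : (π/w)*(β + 2*aa*L0*(w*s/π))*(-Real.sin s)
        = -((π/w)*(β*Real.sin s)) - 2*aa*L0*(s*Real.sin s) := by
      field_simp; ring
    rw [heq]
    have hb1 : -((π/w)*(β*Real.sin s)) ≤ (π/w)*(ia*L0*w* |Real.sin s|) := by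
      have h0 : -(β*Real.sin s) ≤ |β| * |Real.sin s| := by
        rw [← abs_mul]
        exact neg_le_abs _
      have h1 : |β| * |Real.sin s| ≤ ia*L0*w* |Real.sin s| :=
        mul_le_mul_of_nonneg_right hβ (abs_nonneg _)
      have h2 : (0:ℝ) ≤ π/w := le_of_lt (div_pos hπ hw0)
      calc -((π/w)*(β*Real.sin s)) = (π/w)*(-(β*Real.sin s)) := by ring
        _ ≤ (π/w)*(ia*L0*w* |Real.sin s|) :=
            mul_le_mul_of_nonneg_left (h0.trans h1) h2
    have hb2 : -(2*aa*L0*(s*Real.sin s)) ≤ -(2*ia*L0*(s*Real.sin s)) := by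
      nlinarith [mul_nonneg (mul_nonneg (sub_nonneg.2 haL) hL0) hssin]
    have hb3 : (π/w)*(ia*L0*w* |Real.sin s|) = π*ia*L0* |Real.sin s| := by
      field_simp
    have hb4 : π*ia*L0* |Real.sin s| - 2*ia*L0*(s*Real.sin s)
        = ia*L0*(|Real.sin s| *(π - 2* |s|)) := by
      rw [hsseq]; ring
    have hb5 : ia*L0*(|Real.sin s| *(π - 2* |s|)) ≤ ia*L0*(π*Real.cos s) :=
      mul_le_mul_of_nonneg_left jord hiaL0
    calc -((π/w)*(β*Real.sin s)) - 2*aa*L0*(s*Real.sin s)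
        ≤ (π/w)*(ia*L0*w* |Real.sin s|) - 2*ia*L0*(s*Real.sin s) := by linarith
      _ = ia*L0*(|Real.sin s| *(π - 2* |s|)) := by rw [hb3]; rw [hsseq]; ring
      _ ≤ ia*L0*(π*Real.cos s) := hb5
      _ = π*ia*L0*Real.sin θ := by rw [hsinθ]; ring
  -- A part
  have haa0 : 0 < aa := lt_of_lt_of_le hia haL
  have hA : (-M + L0*(xl - w/2)*((r'+l')/2) - aa*(L0^2*(xl - w/2)^2) + aa*L0
      + aa*(π/w)^2 - cc*(L0*(xl - w/2)) + dd) ≤ -(π*ia*L0) := by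
    have t1 : L0*(xl - w/2)*((r'+l')/2) ≤ Dm := by
      refine le_trans (le_abs_self _) ?_
      rw [abs_mul, abs_mul, abs_of_nonneg hL0]; exact hDm
    have t2 : -(aa*(L0^2*(xl - w/2)^2)) ≤ 0 := by
      have : 0 ≤ aa*(L0^2*(xl - w/2)^2) :=
        mul_nonneg haa0.le (mul_nonneg (sq_nonneg _) (sq_nonneg _))
      linarith
    have t3 : aa*L0 ≤ Ma*L0 := mul_le_mul_of_nonneg_right haU hL0
    have t5 : -(cc*(L0*(xl - w/2))) ≤ Dc := by
      refine le_trans (neg_le_abs _) ?_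
      rw [abs_mul, abs_mul, abs_of_nonneg hL0]
      refine le_trans ?_ hDc
      exact mul_le_mul_of_nonneg_right hccb (mul_nonneg hL0 (abs_nonneg _))
    linarith
  -- combine
  have hsum : (-M + L0*(xl - w/2)*((r'+l')/2) - aa*(L0^2*(xl - w/2)^2) + aa*L0
        + aa*(π/w)^2 - cc*(L0*(xl - w/2)) + dd) * Real.sin θ
      + (π/w)*(β + 2*aa*L0*(xl - w/2)) * Real.cos θ ≤ 0 := by
    have h1 := mul_le_mul_of_nonneg_right hA hSnn
    linarith [hBle, h1]
  have := mul_le_mul_of_nonneg_left hsum (mul_nonneg hη hE)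
  simpa using this

lemma spatialD1 (η M t L0 lt mt wt : ℝ) (hw : wt ≠ 0) (y : ℝ) :
    HasDerivAt (fun y' => η * Real.exp (-M * t - L0 * (y' - mt) ^ 2 / 2)
        * Real.sin (π * (y' - lt) / wt))
      (η * Real.exp (-M * t - L0 * (y - mt) ^ 2 / 2) *
        (-(L0 * (y - mt)) * Real.sin (π * (y - lt) / wt)
          + π / wt * Real.cos (π * (y - lt) / wt))) y := by
  have h1 : HasDerivAt (fun y' : ℝ => y' - mt) 1 y := (hasDerivAt_id y).sub_const mt
  have h2 : HasDerivAt (fun y' : ℝ => (y' - mt) ^ 2) (2 * (y - mt)) y := by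
    simpa using h1.fun_pow 2
  have hu : HasDerivAt (fun y' : ℝ => -M * t - L0 * (y' - mt) ^ 2 / 2)
      (-(L0 * (y - mt))) y := by
    have := (hasDerivAt_const y (-M * t)).fun_sub (((h2.const_mul L0)).div_const 2)
    exact this.congr_deriv (by ring)
  have hE : HasDerivAt (fun y' : ℝ => Real.exp (-M * t - L0 * (y' - mt) ^ 2 / 2))
      (Real.exp (-M * t - L0 * (y - mt) ^ 2 / 2) * (-(L0 * (y - mt)))) y := hu.exp
  have hv : HasDerivAt (fun y' : ℝ => π * (y' - lt) / wt) (π / wt) y := by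
    have := (((hasDerivAt_id y).sub_const lt).const_mul π).div_const wt
    exact this.congr_deriv (by ring)
  have hS : HasDerivAt (fun y' : ℝ => Real.sin (π * (y' - lt) / wt))
      (Real.cos (π * (y - lt) / wt) * (π / wt)) y := hv.sin
  have := (hE.const_mul η).fun_mul hS
  exact this.congr_deriv (by ring)

lemma spatialD2 (η M t L0 lt mt wt : ℝ) (hw : wt ≠ 0) (x : ℝ) :
    HasDerivAt (fun y => η * Real.exp (-M * t - L0 * (y - mt) ^ 2 / 2) *
        (-(L0 * (y - mt)) * Real.sin (π * (y - lt) / wt)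
          + π / wt * Real.cos (π * (y - lt) / wt)))
      (η * Real.exp (-M * t - L0 * (x - mt) ^ 2 / 2) *
        ((L0 ^ 2 * (x - mt) ^ 2 - L0 - (π / wt) ^ 2) * Real.sin (π * (x - lt) / wt)
          - 2 * L0 * (x - mt) * (π / wt) * Real.cos (π * (x - lt) / wt))) x := by
  have h1 : HasDerivAt (fun y' : ℝ => y' - mt) 1 x := (hasDerivAt_id x).sub_const mt
  have h2 : HasDerivAt (fun y' : ℝ => (y' - mt) ^ 2) (2 * (x - mt)) x := by
    simpa using h1.fun_pow 2
  have hu : HasDerivAt (fun y' : ℝ => -M * t - L0 * (y' - mt) ^ 2 / 2)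
      (-(L0 * (x - mt))) x := by
    have := (hasDerivAt_const x (-M * t)).fun_sub (((h2.const_mul L0)).div_const 2)
    exact this.congr_deriv (by ring)
  have hE : HasDerivAt (fun y' : ℝ => Real.exp (-M * t - L0 * (y' - mt) ^ 2 / 2))
      (Real.exp (-M * t - L0 * (x - mt) ^ 2 / 2) * (-(L0 * (x - mt)))) x := hu.exp
  have hv : HasDerivAt (fun y' : ℝ => π * (y' - lt) / wt) (π / wt) x := by
    have := (((hasDerivAt_id x).sub_const lt).const_mul π).div_const wt
    exact this.congr_deriv (by ring)
  have hS : HasDerivAt (fun y' : ℝ => Real.sin (π * (y' - lt) / wt))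
      (Real.cos (π * (x - lt) / wt) * (π / wt)) x := hv.sin
  have hC : HasDerivAt (fun y' : ℝ => Real.cos (π * (y' - lt) / wt))
      (-Real.sin (π * (x - lt) / wt) * (π / wt)) x := hv.cos
  have hlin : HasDerivAt (fun y' : ℝ => -(L0 * (y' - mt))) (-L0) x := by
    have := (h1.const_mul L0).fun_neg
    exact this.congr_deriv (by ring)
  have hP : HasDerivAt (fun y' : ℝ => -(L0 * (y' - mt)) * Real.sin (π * (y' - lt) / wt)
      + π / wt * Real.cos (π * (y' - lt) / wt))
      ((-L0) * Real.sin (π * (x - lt) / wt)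
        + -(L0 * (x - mt)) * (Real.cos (π * (x - lt) / wt) * (π / wt))
        + π / wt * (-Real.sin (π * (x - lt) / wt) * (π / wt))) x := by
    exact (hlin.mul hS).add (hC.const_mul (π / wt))
  have := (hE.const_mul η).fun_mul hP
  exact this.congr_deriv (by ring)


lemma timeD (η M L0 x r' l' t : ℝ) (l r : ℝ → ℝ)
    (hr' : HasDerivAt r r' t) (hl' : HasDerivAt l l' t) (hw : r t - l t ≠ 0) :
    HasDerivAt (fun τ => η * Real.exp (-M * τ - L0 * (x - (r τ + l τ) / 2) ^ 2 / 2)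
        * Real.sin (π * (x - l τ) / (r τ - l τ)))
      (η * Real.exp (-M * t - L0 * (x - (r t + l t) / 2) ^ 2 / 2) *
        ((-M + L0 * (x - (r t + l t) / 2) * ((r' + l') / 2))
            * Real.sin (π * (x - l t) / (r t - l t))
          + (π * (-l') * (r t - l t) - π * (x - l t) * (r' - l')) / (r t - l t) ^ 2
            * Real.cos (π * (x - l t) / (r t - l t)))) t := by
  have hm : HasDerivAt (fun τ => (r τ + l τ) / 2) ((r' + l') / 2) t :=
    (hr'.add hl').div_const 2
  have hq : HasDerivAt (fun τ => x - (r τ + l τ) / 2) (0 - (r' + l') / 2) t :=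
    (hasDerivAt_const t x).sub hm
  have hq2 : HasDerivAt (fun τ => (x - (r τ + l τ) / 2) ^ 2)
      (2 * (x - (r t + l t) / 2) ^ 1 * (0 - (r' + l') / 2)) t := hq.pow 2
  have hu : HasDerivAt (fun τ => -M * τ - L0 * (x - (r τ + l τ) / 2) ^ 2 / 2)
      (-M + L0 * (x - (r t + l t) / 2) * ((r' + l') / 2)) t := by
    have := (((hasDerivAt_id t).const_mul (-M))).fun_sub ((hq2.const_mul L0).div_const 2)
    exact this.congr_deriv (by ring)
  have hE := hu.exp
  have hN : HasDerivAt (fun τ => π * (x - l τ)) (π * (0 - l')) t :=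
    ((hasDerivAt_const t x).sub hl').const_mul π
  have hv : HasDerivAt (fun τ => π * (x - l τ) / (r τ - l τ))
      ((π * (0 - l') * (r t - l t) - π * (x - l t) * (r' - l')) / (r t - l t) ^ 2) t :=
    hN.div (hr'.sub hl') hw
  have hS := hv.sin
  have := (hE.const_mul η).fun_mul hS
  exact this.congr_deriv (by ring)


set_option maxHeartbeats 1600000 in
theorem stmt10 (T : ℝ) (hT : 0 < T) (a c d : ℝ → ℝ → ℝ) (l r : ℝ → ℝ)
    (ia Ma Mc Md η : ℝ)
    (hia : 0 < ia) (ha : ∀ x t, ia ≤ a x t) (haU : ∀ x t, a x t ≤ Ma)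
    (hc : ∀ x t, |c x t| ≤ Mc) (hd : ∀ x t, |d x t| ≤ Md)
    (hl : ContDiff ℝ (⊤ : ℕ∞) l) (hr : ContDiff ℝ (⊤ : ℕ∞) r)
    (hlr : ∀ t ∈ Set.Icc (0 : ℝ) T, l t < r t)
    (hη : 0 < η) :
    ∀ L0 : ℝ,
      L0 = 2 * sSup ((fun t => (|deriv r t| + |deriv l t| + Mc) / (r t - l t)) ''
              Set.Icc 0 T) / ia →
      ∃ M0 : ℝ, ∀ M ≥ M0, ∀ t ∈ Set.Ioc (0 : ℝ) T, ∀ x ∈ Set.Ioo (l t) (r t),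
        (fun ψ : ℝ → ℝ → ℝ =>
          deriv (fun τ => ψ x τ) t - a x t * deriv (deriv (fun y => ψ y t)) x
            + c x t * deriv (fun y => ψ y t) x + d x t * ψ x t ≤ 0)
        (fun x' t' => η * Real.exp (-M * t' - L0 * (x' - (r t' + l t') / 2) ^ 2 / 2)
            * Real.sin (Real.pi * (x' - l t') / (r t' - l t'))) := by
  intro L0 hL0
  have hπ : (0:ℝ) < π := Real.pi_pos
  have hT0 : (0:ℝ) ∈ Set.Icc (0:ℝ) T := Set.left_mem_Icc.2 hT.le
  have hKne : (Set.Icc (0:ℝ) T).Nonempty := ⟨0, hT0⟩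
  have hcw : Continuous fun u => r u - l u := hr.continuous.sub hl.continuous
  have hdr : Continuous (deriv r) := hr.continuous_deriv (by simp)
  have hdl : Continuous (deriv l) := hl.continuous_deriv (by simp)
  obtain ⟨t1, ht1, hmin⟩ := isCompact_Icc.exists_isMinOn hKne hcw.continuousOn
  obtain ⟨t2, ht2, hmax⟩ := isCompact_Icc.exists_isMaxOn hKne hcw.continuousOn
  obtain ⟨t3, ht3, hmaxr⟩ := isCompact_Icc.exists_isMaxOn hKne hdr.abs.continuousOn
  obtain ⟨t4, ht4, hmaxl⟩ := isCompact_Icc.exists_isMaxOn hKne hdl.abs.continuousOn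
  set wmin := r t1 - l t1 with hwmindef
  set Wmax := r t2 - l t2 with hWmaxdef
  set CR := |deriv r t3| with hCRdef
  set CL := |deriv l t4| with hCLdef
  have hwmin0 : 0 < wmin := sub_pos.2 (hlr t1 ht1)
  have hminle : ∀ u ∈ Set.Icc (0:ℝ) T, wmin ≤ r u - l u := isMinOn_iff.mp hmin
  have hmaxge : ∀ u ∈ Set.Icc (0:ℝ) T, r u - l u ≤ Wmax := isMaxOn_iff.mp hmax
  have hCR : ∀ u ∈ Set.Icc (0:ℝ) T, |deriv r u| ≤ CR := isMaxOn_iff.mp hmaxr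
  have hCL : ∀ u ∈ Set.Icc (0:ℝ) T, |deriv l u| ≤ CL := isMaxOn_iff.mp hmaxl
  have Mc0 : (0:ℝ) ≤ Mc := le_trans (abs_nonneg _) (hc 0 0)
  have Ma0 : (0:ℝ) < Ma := lt_of_lt_of_le hia ((ha 0 0).trans (haU 0 0))
  have hfc : ContinuousOn
      (fun u => (|deriv r u| + |deriv l u| + Mc) / (r u - l u)) (Set.Icc 0 T) :=
    ContinuousOn.div (((hdr.abs.add hdl.abs).add continuous_const).continuousOn)
      hcw.continuousOn (fun u hu => ne_of_gt (sub_pos.2 (hlr u hu)))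
  have hbdd : BddAbove ((fun u => (|deriv r u| + |deriv l u| + Mc) / (r u - l u)) ''
      Set.Icc 0 T) := (isCompact_Icc.image_of_continuousOn hfc).bddAbove
  have hfle : ∀ u ∈ Set.Icc (0:ℝ) T,
      (|deriv r u| + |deriv l u| + Mc) / (r u - l u) ≤
        sSup ((fun u => (|deriv r u| + |deriv l u| + Mc) / (r u - l u)) ''
          Set.Icc 0 T) := fun u hu => le_csSup hbdd ⟨u, hu, rfl⟩
  have hiaL0 : ia * L0 = 2 * sSup ((fun u => (|deriv r u| + |deriv l u| + Mc) /
      (r u - l u)) '' Set.Icc 0 T) := by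
    rw [hL0]; field_simp
  have hL0nn : 0 ≤ L0 := by
    have h0 : 0 ≤ (|deriv r 0| + |deriv l 0| + Mc) / (r 0 - l 0) :=
      div_nonneg (by positivity) (sub_pos.2 (hlr 0 hT0)).le
    have h1 := le_trans h0 (hfle 0 hT0)
    nlinarith
  refine ⟨π*ia*L0 + L0*(Wmax/2)*((CR+CL)/2) + Ma*L0 + Ma*(π^2/wmin^2)
      + Mc*(L0*(Wmax/2)) + Md, ?_⟩
  intro M hM t ht x hx
  have htK : t ∈ Set.Icc (0:ℝ) T := ⟨ht.1.le, ht.2⟩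
  have hw0 : 0 < r t - l t := sub_pos.2 (hlr t htK)
  have hwne : r t - l t ≠ 0 := ne_of_gt hw0
  have hWm0 : 0 < Wmax := lt_of_lt_of_le hw0 (hmaxge t htK)
  have hr' : HasDerivAt r (deriv r t) t := (hr.differentiable (by simp) t).hasDerivAt
  have hl' : HasDerivAt l (deriv l t) t := (hl.differentiable (by simp) t).hasDerivAt
  -- facts for keyIneq
  have hxl0 : 0 < x - l t := sub_pos.2 hx.1
  have hxlw : x - l t < r t - l t := by have := hx.2; linarith
  have hdd : d x t ≤ Md := le_trans (le_abs_self _) (hd x t)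
  have hKeyB : |deriv l t| + |deriv r t - deriv l t| + Mc ≤ ia * L0 * (r t - l t) := by
    have habs : |deriv r t - deriv l t| ≤ |deriv r t| + |deriv l t| := abs_sub _ _
    have h1 := hfle t htK
    have h2 : (|deriv r t| + |deriv l t| + Mc) / (r t - l t) * (r t - l t)
        = |deriv r t| + |deriv l t| + Mc := div_mul_cancel₀ _ hwne
    have h3 : |deriv r t| + |deriv l t| + Mc ≤
        sSup ((fun u => (|deriv r u| + |deriv l u| + Mc) / (r u - l u)) ''
          Set.Icc 0 T) * (r t - l t) := by
      rw [← h2]; exact mul_le_mul_of_nonneg_right h1 hw0.le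
    have h4 : ia * L0 * (r t - l t) =
        2 * (sSup ((fun u => (|deriv r u| + |deriv l u| + Mc) / (r u - l u)) ''
          Set.Icc 0 T) * (r t - l t)) := by rw [hiaL0]; ring
    have h5 : 0 ≤ |deriv r t| := abs_nonneg _
    linarith
  have hXb : |x - l t - (r t - l t)/2| ≤ Wmax/2 := by
    have h6 := hmaxge t htK
    exact abs_le.2 ⟨by linarith [hx.1], by linarith [hx.2]⟩
  have hmb : |(deriv r t + deriv l t)/2| ≤ (CR+CL)/2 := by
    have h7 : |deriv r t + deriv l t| ≤ |deriv r t| + |deriv l t| := abs_add_le _ _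
    have h8 := hCR t htK
    have h9 := hCL t htK
    calc |(deriv r t + deriv l t)/2| = |deriv r t + deriv l t|/2 := by
          rw [abs_div]; norm_num
      _ ≤ (CR+CL)/2 := by linarith
  have hDm' : L0 * |x - l t - (r t - l t)/2| * |(deriv r t + deriv l t)/2|
      ≤ L0*(Wmax/2)*((CR+CL)/2) :=
    mul_le_mul (mul_le_mul_of_nonneg_left hXb hL0nn) hmb (abs_nonneg _)
      (mul_nonneg hL0nn (by linarith))
  have hDc' : Mc * (L0 * |x - l t - (r t - l t)/2|) ≤ Mc*(L0*(Wmax/2)) :=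
    mul_le_mul_of_nonneg_left (mul_le_mul_of_nonneg_left hXb hL0nn) Mc0
  have hPw' : a x t * (π/(r t - l t))^2 ≤ Ma*(π^2/wmin^2) := by
    have h7 : (π/(r t - l t))^2 = π^2/(r t - l t)^2 := div_pow _ _ _
    have h8 : π^2/(r t - l t)^2 ≤ π^2/wmin^2 := by
      gcongr
      exact hminle t htK
    calc a x t * (π/(r t - l t))^2 ≤ Ma * (π/(r t - l t))^2 :=
          mul_le_mul_of_nonneg_right (haU x t) (sq_nonneg _)
      _ ≤ Ma*(π^2/wmin^2) := by rw [h7]; exact mul_le_mul_of_nonneg_left h8 Ma0.le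
  have hM' : π*ia*L0 + L0*(Wmax/2)*((CR+CL)/2) + Ma*L0 + Ma*(π^2/wmin^2)
      + Mc*(L0*(Wmax/2)) + Md ≤ M := hM
  have hfinal := keyIneq η (Real.exp (-M * t - L0 * (x - (r t + l t)/2)^2/2))
    ia Ma Mc Md L0 M (a x t) (c x t) (d x t) (r t - l t) (x - l t)
    (deriv r t) (deriv l t) (L0*(Wmax/2)*((CR+CL)/2)) (Mc*(L0*(Wmax/2)))
    (Ma*(π^2/wmin^2)) hη.le (Real.exp_nonneg _) hw0 hxl0 hxlw hia (ha x t)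
    (haU x t) (hc x t) hdd hL0nn hKeyB hDm' hDc' hPw' hM'
  dsimp only
  rw [(timeD η M L0 x (deriv r t) (deriv l t) t l r hr' hl' hwne).deriv]
  have hfun : deriv (fun y => η * Real.exp (-M * t - L0 * (y - (r t + l t) / 2) ^ 2 / 2)
      * Real.sin (π * (y - l t) / (r t - l t))) =
      fun y => η * Real.exp (-M * t - L0 * (y - (r t + l t)/2)^2/2) *
        (-(L0 * (y - (r t + l t)/2)) * Real.sin (π * (y - l t)/(r t - l t))
          + π/(r t - l t) * Real.cos (π * (y - l t)/(r t - l t))) :=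
    funext fun y => (spatialD1 η M t L0 (l t) ((r t + l t)/2) (r t - l t) hwne y).deriv
  rw [hfun, (spatialD2 η M t L0 (l t) ((r t + l t)/2) (r t - l t) hwne x).deriv]
  dsimp only
  refine le_of_eq_of_le ?_ hfinal
  field_simp
  ring
end

section
/- Penalty bound: if w^ε is a classical solution of w_t - w_{xx} = -β(ε^{-1}(w - p)) on ℝ×(0,T] with β(z) = m(max{0,z})³, w^ε(·,0) ≤ p(0), and p ∈ C¹ with ‖ṗ‖_∞ ≤ m, then w^ε ≤ p + ε on ℝ×(0,T], and consequently 0 ≤ β(ε^{-1}(w^ε - p)) ≤ m everywhere. -/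
/-!
Put `v = w - p - ε`. Initially `v ≤ 0`, and wherever `v > 0` we have `(w - p)/ε > 1`, so the
penalty `β((w - p)/ε) ≥ m ≥ -ṗ` and `v` is a subsolution of the heat equation there. The weak
maximum principle for bounded subsolutions on `ℝ` gives `v ≤ 0`, i.e. `(w - p)/ε ≤ 1`, which
bounds the penalty by `m`. The maximum principle itself is proved by subtracting `σ (3t + x²)`,
on which `∂ₜ - ∂ₓₓ = σ > 0` and which dominates `v` for large `|x|`: this turns `v` into a strict
subsolution attaining a positive maximum on the strip, necessarily at some `t > 0`, where
`∂ₜ ≥ 0 ≥ ∂ₓₓ` contradicts strictness; finally `σ → 0`.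
-/

open Set Filter Topology

theorem HasDerivAt.nonneg_of_isMaxOn_Icc {f : ℝ → ℝ} {f' a b : ℝ} (hf : HasDerivAt f f' b)
    (hab : a < b) (hmax : IsMaxOn f (Icc a b) b) : 0 ≤ f' := by
  have hcone : a - b ∈ posTangentConeAt (Icc a b) b :=
    mem_posTangentConeAt_of_segment_subset (by
      rw [add_sub_cancel, segment_eq_Icc', min_eq_right hab.le, max_eq_left hab.le])
  have := hmax.localize.hasFDerivWithinAt_nonpos hf.hasFDerivAt.hasFDerivWithinAt hcone
  rw [ContinuousLinearMap.toSpanSingleton_apply, smul_eq_mul] at this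
  nlinarith

theorem IsLocalMax.second_deriv_nonpos {g g' : ℝ → ℝ} {a g'' : ℝ}
    (hg : ∀ᶠ x in 𝓝 a, HasDerivAt g (g' x) x) (hg' : HasDerivAt g' g'' a)
    (hmax : IsLocalMax g a) : g'' ≤ 0 := by
  by_contra! hpos
  have hderiv : deriv g =ᶠ[𝓝 a] g' := hg.mono fun x hx => hx.deriv
  have hsecond : deriv (deriv g) a = g'' := hderiv.deriv_eq.trans hg'.deriv
  -- a positive second derivative would make `a` also a local minimum, so `g` is locally constant
  have hmin : IsLocalMin g a := isLocalMin_of_deriv_deriv_pos (hsecond ▸ hpos)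
    (hmax.deriv_eq_zero) hg.self_of_nhds.continuousAt
  have hconst : g =ᶠ[𝓝 a] fun _ => g a :=
    (hmin.and hmax).mono fun x hx => le_antisymm hx.2 hx.1
  have hderiv0 : deriv g =ᶠ[𝓝 a] fun _ => 0 :=
    hconst.eventuallyEq_nhds.mono fun x hx => hx.deriv_eq.trans (deriv_const x _)
  rw [← hsecond, hderiv0.deriv_eq, deriv_const] at hpos
  exact hpos.false

theorem IsCompact.exists_isMaxOn_univ_prod {α β γ : Type*} [TopologicalSpace α]
    [TopologicalSpace β] [T2Space β] [LinearOrder γ] [TopologicalSpace γ] [ClosedIciTopology γ]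
    {K : Set β} (hK : IsCompact K) {f : α × β → γ} (hf : ContinuousOn f (univ ×ˢ K))
    {q₀ : α × β} (hq₀ : q₀ ∈ univ ×ˢ K) (hfar : ∀ᶠ x in cocompact α, ∀ y ∈ K, f (x, y) ≤ f q₀) :
    ∃ q ∈ univ ×ˢ K, IsMaxOn f (univ ×ˢ K) q := by
  refine hf.exists_isMaxOn' (isClosed_univ.prod hK.isClosed) hq₀ ?_
  rw [← coprod_cocompact, Filter.coprod, inf_sup_right, eventually_sup,
    eventually_inf_principal, eventually_inf_principal]
  refine ⟨(hfar.comap Prod.fst).mono fun q hq hqK => hq q.2 hqK.2, ?_⟩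
  filter_upwards [preimage_mem_comap hK.compl_mem_cocompact] with q hq hqK
  exact absurd hqK.2 hq

theorem nonpos_of_heat_strict_subsolution {T : ℝ} {u ut ux uxx : ℝ → ℝ → ℝ}
    (hcont : Continuous fun q : ℝ × ℝ => u q.1 q.2)
    (hfar : ∀ᶠ x in cocompact ℝ, ∀ t ∈ Icc 0 T, u x t ≤ 0)
    (hinit : ∀ x, u x 0 ≤ 0)
    (hut : ∀ x, ∀ t ∈ Ioc 0 T, HasDerivAt (u x ·) (ut x t) t)
    (hux : ∀ x, ∀ t ∈ Ioc 0 T, HasDerivAt (u · t) (ux x t) x)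
    (huxx : ∀ x, ∀ t ∈ Ioc 0 T, HasDerivAt (ux · t) (uxx x t) x)
    (hsub : ∀ x, ∀ t ∈ Ioc 0 T, 0 < u x t → ut x t - uxx x t < 0) :
    ∀ x, ∀ t ∈ Ioc 0 T, u x t ≤ 0 := by
  intro x₀ t₀ ht₀
  by_contra! hpos
  obtain ⟨⟨x₁, t₁⟩, ⟨-, ht₁⟩, hmax⟩ := isCompact_Icc.exists_isMaxOn_univ_prod
    hcont.continuousOn (q₀ := (x₀, t₀)) ⟨trivial, Ioc_subset_Icc_self ht₀⟩
    (hfar.mono fun x hx t ht => (hx t ht).trans hpos.le)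
  have hmax' : ∀ x, ∀ t ∈ Icc 0 T, u x t ≤ u x₁ t₁ := fun x t ht => hmax (mk_mem_prod trivial ht)
  have hpos₁ : 0 < u x₁ t₁ := hpos.trans_le (hmax' x₀ t₀ (Ioc_subset_Icc_self ht₀))
  have ht₁' : t₁ ∈ Ioc 0 T := by
    refine ⟨ht₁.1.lt_of_ne ?_, ht₁.2⟩
    rintro rfl
    exact (hinit x₁).not_gt hpos₁
  have hut₁ : 0 ≤ ut x₁ t₁ := (hut x₁ t₁ ht₁').nonneg_of_isMaxOn_Icc ht₁'.1
    fun t ht => hmax' x₁ t ⟨ht.1, ht.2.trans ht₁.2⟩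
  have huxx₁ : uxx x₁ t₁ ≤ 0 := IsLocalMax.second_deriv_nonpos
    (Eventually.of_forall fun x => hux x t₁ ht₁') (huxx x₁ t₁ ht₁')
    (IsMaxOn.isLocalMax (fun x _ => hmax' x t₁ ht₁) univ_mem)
  linarith [hsub x₁ t₁ ht₁' hpos₁]

theorem nonpos_of_heat_subsolution {T : ℝ} {v vt vx vxx : ℝ → ℝ → ℝ}
    (hcont : Continuous fun q : ℝ × ℝ => v q.1 q.2)
    (hbdd : ∃ C, ∀ x, ∀ t ∈ Icc 0 T, v x t ≤ C)
    (hinit : ∀ x, v x 0 ≤ 0)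
    (hvt : ∀ x, ∀ t ∈ Ioc 0 T, HasDerivAt (v x ·) (vt x t) t)
    (hvx : ∀ x, ∀ t ∈ Ioc 0 T, HasDerivAt (v · t) (vx x t) x)
    (hvxx : ∀ x, ∀ t ∈ Ioc 0 T, HasDerivAt (vx · t) (vxx x t) x)
    (hsub : ∀ x, ∀ t ∈ Ioc 0 T, 0 < v x t → vt x t - vxx x t ≤ 0) :
    ∀ x, ∀ t ∈ Ioc 0 T, v x t ≤ 0 := by
  obtain ⟨C, hC⟩ := hbdd
  intro x t ht
  have hσ : ∀ σ > 0, v x t ≤ σ * (3 * t + x ^ 2) := by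
    intro σ hσ
    have hfar : ∀ᶠ y in cocompact ℝ, C ≤ σ * y ^ 2 := by
      refine ((tendsto_pow_atTop two_ne_zero).comp tendsto_norm_cocompact_atTop
        |>.const_mul_atTop hσ).eventually_ge_atTop C |>.mono fun y hy => ?_
      simpa [Real.norm_eq_abs, sq_abs] using hy
    have := nonpos_of_heat_strict_subsolution
      (u := fun y s => v y s - σ * (3 * s + y ^ 2)) (ut := fun y s => vt y s - 3 * σ)
      (ux := fun y s => vx y s - 2 * σ * y) (uxx := fun y s => vxx y s - 2 * σ)
      (by fun_prop)
      (hfar.mono fun y hy s hs => by nlinarith [hC y s hs, hs.1])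
      (fun y => by nlinarith [hinit y])
      (fun y s hs => ((hvt y s hs).sub
        ((((hasDerivAt_id s).const_mul 3).add_const (y ^ 2)).const_mul σ)).congr_deriv (by ring))
      (fun y s hs => ((hvx y s hs).sub
        (((hasDerivAt_pow 2 y).const_add (3 * s)).const_mul σ)).congr_deriv (by ring))
      (fun y s hs => ((hvxx y s hs).sub
        ((hasDerivAt_id y).const_mul (2 * σ))).congr_deriv (by ring))
      (fun y s hs hpos => by
        have := hsub y s hs (by nlinarith [hs.1])
        linarith)
      x t ht
    linarith
  have hlim : Tendsto (fun σ : ℝ => σ * (3 * t + x ^ 2)) (𝓝[>] 0) (𝓝 0) := by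
    simpa using ((tendsto_id (x := 𝓝 (0 : ℝ))).mul_const (3 * t + x ^ 2)).mono_left
      nhdsWithin_le_nhds
  exact ge_of_tendsto hlim (eventually_nhdsWithin_of_forall hσ)

theorem mul_max_zero_pow_le_self {m z : ℝ} (n : ℕ) (hm : 0 ≤ m) (hz : z ≤ 1) :
    m * max 0 z ^ n ≤ m :=
  mul_le_of_le_one_right hm (pow_le_one₀ (le_max_left _ _) (max_le zero_le_one hz))

theorem le_mul_max_zero_pow_self {m z : ℝ} (n : ℕ) (hm : 0 ≤ m) (hz : 1 ≤ z) :
    m ≤ m * max 0 z ^ n :=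
  le_mul_of_one_le_right hm (one_le_pow₀ (hz.trans (le_max_right _ _)))

theorem stmt13_general (T ε m : ℝ) (hε : 0 < ε)
    (p : ℝ → ℝ) (hp : ContDiff ℝ 1 p)
    (hm : ∀ t ∈ Set.Icc (0 : ℝ) T, |deriv p t| ≤ m)
    (β : ℝ → ℝ) (hβ : ∀ z, β z = m * (max 0 z) ^ 3)
    (w wt wx wxx : ℝ → ℝ → ℝ)
    (hwcont : Continuous (fun q : ℝ × ℝ => w q.1 q.2))
    (hbdd : ∃ Cb, ∀ x t, |w x t| ≤ Cb)
    (hwt : ∀ x, ∀ t ∈ Set.Ioc (0 : ℝ) T, HasDerivAt (fun τ => w x τ) (wt x t) t)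
    (hwx : ∀ x, ∀ t ∈ Set.Ioc (0 : ℝ) T, HasDerivAt (fun y => w y t) (wx x t) x)
    (hwxx : ∀ x, ∀ t ∈ Set.Ioc (0 : ℝ) T, HasDerivAt (fun y => wx y t) (wxx x t) x)
    (heq : ∀ x, ∀ t ∈ Set.Ioc (0 : ℝ) T, wt x t - wxx x t = -β ((w x t - p t) / ε))
    (hic : ∀ x, w x 0 ≤ p 0) :
    ∀ x, ∀ t ∈ Set.Ioc (0 : ℝ) T,
      w x t ≤ p t + ε ∧ 0 ≤ β ((w x t - p t) / ε) ∧ β ((w x t - p t) / ε) ≤ m := by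
  have hpd : Differentiable ℝ p := hp.differentiable one_ne_zero
  have hbelow : ∃ C, ∀ x, ∀ t ∈ Icc 0 T, w x t - p t - ε ≤ C := by
    obtain ⟨Cb, hCb⟩ := hbdd
    obtain ⟨Cp, hCp⟩ := isCompact_Icc.exists_bound_of_continuousOn hp.continuous.continuousOn
    exact ⟨Cb + Cp, fun x t ht => by
      linarith [(abs_le.mp (hCb x t)).2, (abs_le.mp (hCp t ht)).1, hε]⟩
  have hupper : ∀ x, ∀ t ∈ Ioc 0 T, w x t - p t - ε ≤ 0 :=
    nonpos_of_heat_subsolution (vt := fun x t => wt x t - deriv p t) (vx := wx) (vxx := wxx)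
      (by fun_prop) hbelow (fun x => by linarith [hic x])
      (fun x t ht => ((hwt x t ht).sub (hpd t).hasDerivAt).sub_const ε)
      (fun x t ht => ((hwx x t ht).sub_const _).sub_const _) hwxx
      (fun x t ht hpos => by
        have hdp := hm t (Ioc_subset_Icc_self ht)
        have hpen : m ≤ β ((w x t - p t) / ε) := by
          rw [hβ]
          exact le_mul_max_zero_pow_self 3 ((abs_nonneg _).trans hdp)
            ((one_le_div hε).mpr (by linarith))
        linarith [heq x t ht, (abs_le.mp hdp).1])
  intro x t ht
  have hm0 : 0 ≤ m := (abs_nonneg _).trans (hm t (Ioc_subset_Icc_self ht))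
  have hz : (w x t - p t) / ε ≤ 1 := (div_le_one hε).mpr (by linarith [hupper x t ht])
  rw [hβ]
  exact ⟨by linarith [hupper x t ht], by positivity, mul_max_zero_pow_le_self 3 hm0 hz⟩

theorem stmt13 (T ε m : ℝ) (hT : 0 < T) (hε : 0 < ε)
    (p : ℝ → ℝ) (hp : ContDiff ℝ 1 p)
    (hm : ∀ t ∈ Set.Icc (0 : ℝ) T, |deriv p t| ≤ m)
    (β : ℝ → ℝ) (hβ : ∀ z, β z = m * (max 0 z) ^ 3)
    (w wt wx wxx : ℝ → ℝ → ℝ)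
    (hwcont : Continuous (fun q : ℝ × ℝ => w q.1 q.2))
    (hbdd : ∃ Cb, ∀ x t, |w x t| ≤ Cb)
    (hwt : ∀ x, ∀ t ∈ Set.Ioc (0 : ℝ) T, HasDerivAt (fun τ => w x τ) (wt x t) t)
    (hwx : ∀ x, ∀ t ∈ Set.Ioc (0 : ℝ) T, HasDerivAt (fun y => w y t) (wx x t) x)
    (hwxx : ∀ x, ∀ t ∈ Set.Ioc (0 : ℝ) T, HasDerivAt (fun y => wx y t) (wxx x t) x)
    (heq : ∀ x, ∀ t ∈ Set.Ioc (0 : ℝ) T, wt x t - wxx x t = -β ((w x t - p t) / ε))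
    (hic : ∀ x, w x 0 ≤ p 0) :
    ∀ x, ∀ t ∈ Set.Ioc (0 : ℝ) T,
      w x t ≤ p t + ε ∧ 0 ≤ β ((w x t - p t) / ε) ∧ β ((w x t - p t) / ε) ≤ m :=
  stmt13_general T ε m hε p hp hm β hβ w wt wx wxx hwcont hbdd hwt hwx hwxx heq hic
end
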